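/- Let n ≥ 3 be a natural number and let C be an equitable proper coloring of the blossom graph Bl_n that uses exactly n+1 colors, with colors indexed so that the class sizes are non-increasing. Then the equitable coloring mean of C equals (n+1)^2/(2n+1) and the equitable coloring variance of C equals (n^4+2n^3+2n^2+n)/(3(2n+1)^2). -/
import Mathlib

open Finset

/-- The size of the color class of color `i` under the coloring `c`. -/
def classSize {V : Type*} [Fintype V] {k : ℕ} (c : V → Fin k) (i : Fin k) : ℕ :=
  (Finset.univ.filter (fun v => c v = i)).card

/-- The equitable coloring mean `μ = (∑ i·θ_i)/N` (colors indexed `1,…,k`). -/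
def eqMean {V : Type*} [Fintype V] {k : ℕ} (c : V → Fin k) : ℚ :=
  (∑ i : Fin k, (((i : ℕ) : ℚ) + 1) * (classSize c i : ℚ)) / (Fintype.card V : ℚ)

/-- The equitable coloring variance `σ² = (∑ i²·θ_i)/N − μ²`. -/
def eqVar {V : Type*} [Fintype V] {k : ℕ} (c : V → Fin k) : ℚ :=
  (∑ i : Fin k, (((i : ℕ) : ℚ) + 1) ^ 2 * (classSize c i : ℚ)) / (Fintype.card V : ℚ)
    - (eqMean c) ^ 2

/-- The blossom graph `Bl_n`: the closed sunflower graph together with edges joining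
every outer vertex `u_i` to the central vertex. -/
def blossomGraph (n : ℕ) : SimpleGraph (Option (Fin n ⊕ Fin n)) :=
  SimpleGraph.fromRel (fun a b =>
    match a, b with
    | none, some _ => True
    | some (Sum.inl i), some (Sum.inl j) => j.val = (i.val + 1) % n
    | some (Sum.inr i), some (Sum.inl j) => j = i ∨ j.val = (i.val + 1) % n
    | some (Sum.inr i), some (Sum.inr j) => j.val = (i.val + 1) % n
    | _, _ => False)

lemma aux_sum_lin (n : ℕ) :
    ∑ i : Fin n, (((i : ℕ) : ℚ) + 1) = (n : ℚ) * ((n : ℚ) + 1) / 2 := by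
  induction n with
  | zero => simp
  | succ m ih =>
    rw [Fin.sum_univ_castSucc]
    simp only [Fin.coe_castSucc, Fin.val_last]
    rw [ih]
    push_cast
    ring

lemma aux_sum_sq (n : ℕ) :
    ∑ i : Fin n, (((i : ℕ) : ℚ) + 1) ^ 2
      = (n : ℚ) * ((n : ℚ) + 1) * (2 * (n : ℚ) + 1) / 6 := by
  induction n with
  | zero => simp
  | succ m ih =>
    rw [Fin.sum_univ_castSucc]
    simp only [Fin.coe_castSucc, Fin.val_last]
    rw [ih]
    push_cast
    ring

theorem blossom_eqMean_eqVar (n : ℕ) (hn : 3 ≤ n)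
    (c : Option (Fin n ⊕ Fin n) → Fin (n + 1))
    (hproper : ∀ u v, (blossomGraph n).Adj u v → c u ≠ c v)
    (hsurj : Function.Surjective c)
    (hequit : ∀ i j : Fin (n + 1), classSize c i ≤ classSize c j + 1)
    (hmono : ∀ i j : Fin (n + 1), i ≤ j → classSize c j ≤ classSize c i) :
    eqMean c = ((n : ℚ) + 1) ^ 2 / (2 * (n : ℚ) + 1) ∧
      eqVar c = ((n : ℚ) ^ 4 + 2 * (n : ℚ) ^ 3 + 2 * (n : ℚ) ^ 2 + (n : ℚ))
        / (3 * (2 * (n : ℚ) + 1) ^ 2) := by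
  have hcard : Fintype.card (Option (Fin n ⊕ Fin n)) = 2 * n + 1 := by
    simp [Fintype.card_option, Fintype.card_sum]; omega
  -- sum of class sizes is the number of vertices
  have hsum : ∑ i : Fin (n + 1), classSize c i = 2 * n + 1 := by
    have h := Finset.card_eq_sum_card_fiberwise
      (s := (univ : Finset (Option (Fin n ⊕ Fin n)))) (t := univ) (f := c)
      (fun x _ => mem_univ _)
    have : (univ : Finset (Option (Fin n ⊕ Fin n))).card = 2 * n + 1 := by
      rw [Finset.card_univ, hcard]
    rw [this] at h
    exact h.symm
  have hpos : ∀ i : Fin (n + 1), 1 ≤ classSize c i := by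
    intro i
    obtain ⟨v, hv⟩ := hsurj i
    exact Finset.card_pos.mpr ⟨v, by simp [hv]⟩
  -- last class has size 1
  have hlast : classSize c (Fin.last n) = 1 := by
    by_contra h
    have h2 : ∀ i : Fin (n + 1), 2 ≤ classSize c i := by
      intro i
      have := hmono i (Fin.last n) (Fin.le_last i)
      have := hpos (Fin.last n)
      omega
    have hle := Finset.sum_le_sum (fun i (_ : i ∈ univ) => h2 i)
    rw [hsum, Finset.sum_const, Finset.card_univ, Fintype.card_fin, smul_eq_mul] at hle
    omega
  -- other classes have size 2
  have hval : ∀ i : Fin (n + 1), (i : ℕ) < n → classSize c i = 2 := by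
    intro i hi
    by_contra h
    have hfi : classSize c i = 1 := by
      have := hequit i (Fin.last n)
      have := hpos i
      omega
    have hb : ∀ j : Fin (n + 1),
        classSize c j ≤ if (j : ℕ) < (i : ℕ) then 2 else 1 := by
      intro j
      by_cases hj : (j : ℕ) < (i : ℕ)
      · simp only [hj, if_true]
        have := hequit j (Fin.last n)
        omega
      · simp only [hj, if_false]
        have := hmono i j (by omega)
        omega
    have hle := Finset.sum_le_sum (fun j (_ : j ∈ univ) => hb j)
    rw [hsum] at hle
    have hgen : ∀ m : ℕ, ∑ j ∈ Finset.range m, (if j < (i : ℕ) then 2 else 1)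
        = m + min m (i : ℕ) := by
      intro m
      induction m with
      | zero => simp
      | succ k ihk =>
        rw [Finset.sum_range_succ, ihk]
        by_cases hk : k < (i : ℕ) <;> simp [hk] <;> omega
    have hrhs : ∑ j : Fin (n + 1), (if (j : ℕ) < (i : ℕ) then 2 else 1)
        = n + 1 + (i : ℕ) := by
      rw [Fin.sum_univ_eq_sum_range (fun j => if j < (i : ℕ) then 2 else 1), hgen]
      omega
    rw [hrhs] at hle
    omega
  -- compute the two sums
  have hcs : ∀ i : Fin n, classSize c i.castSucc = 2 := by
    intro i
    exact hval i.castSucc (by simp)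
  have hsum1 : ∑ i : Fin (n + 1), (((i : ℕ) : ℚ) + 1) * (classSize c i : ℚ)
      = ((n : ℚ) + 1) ^ 2 := by
    rw [Fin.sum_univ_castSucc]
    simp only [Fin.coe_castSucc, Fin.val_last, hcs, hlast]
    push_cast
    rw [← Finset.sum_mul, aux_sum_lin]
    ring
  have hsum2 : ∑ i : Fin (n + 1), (((i : ℕ) : ℚ) + 1) ^ 2 * (classSize c i : ℚ)
      = (n : ℚ) * ((n : ℚ) + 1) * (2 * (n : ℚ) + 1) / 3 + ((n : ℚ) + 1) ^ 2 := by
    rw [Fin.sum_univ_castSucc]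
    simp only [Fin.coe_castSucc, Fin.val_last, hcs, hlast]
    push_cast
    rw [← Finset.sum_mul, aux_sum_sq]
    ring
  have hne : (2 * (n : ℚ) + 1) ≠ 0 := by positivity
  have hmean : eqMean c = ((n : ℚ) + 1) ^ 2 / (2 * (n : ℚ) + 1) := by
    rw [eqMean, hsum1, hcard]
    push_cast
    ring
  refine ⟨hmean, ?_⟩
  rw [eqVar, hsum2, hcard, hmean]
  push_cast
  field_simp
  ring
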